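/- For real h and real r with β = 0 if r ≥ 0 and β = 1/2 if r < 0, Owen's identity holds: T(h, r) + T(rh, 1/r) = (Φ(h) + Φ(rh))/2 − Φ(h)Φ(rh) − β (for r ≠ 0). -/

import Mathlib

/-!
Fix `r ≠ 0` and differentiate both sides in `h`. Differentiating under the integral and
substituting `u = h x` gives `∂ₕ T(h, a) = -φ(h) (Φ(a h) - 1/2)` with `φ = Φ'`, and with this
the two sides have the same derivative, so their difference is constant. At `h = 0` we have
`T(0, a) = arctan a / (2π)`, and `arctan r + arctan (1/r) = ±π/2` according to the sign of `r`
produces the constant `β`.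
-/

open Real MeasureTheory

/-- Owen's T function. -/
noncomputable def OwenT (h a : ℝ) : ℝ :=
  (1 / (2 * Real.pi)) * ∫ x in (0:ℝ)..a, Real.exp (-h ^ 2 * (1 + x ^ 2) / 2) / (1 + x ^ 2)

/-- Standard normal cdf. -/
noncomputable def stdCdf (x : ℝ) : ℝ :=
  ∫ t in Set.Iic x, Real.exp (-t ^ 2 / 2) / Real.sqrt (2 * Real.pi)

open Set intervalIntegral ProbabilityTheory

section IntegralIic

variable {E : Type*} [NormedAddCommGroup E] [NormedSpace ℝ E] {f : ℝ → E}

theorem hasDerivAt_integral_Iic [CompleteSpace E] (hf : Continuous f) (hfi : Integrable f)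
    (x : ℝ) :
    HasDerivAt (fun u ↦ ∫ t in Iic u, f t) (f x) x := by
  have hsplit : (fun u ↦ ∫ t in Iic u, f t) = fun u ↦ (∫ t in Iic 0, f t) + ∫ t in 0..u, f t := by
    funext u
    rw [← integral_Iic_sub_Iic hfi.integrableOn hfi.integrableOn, add_sub_cancel]
  rw [hsplit]
  exact ((hf.integral_hasStrictDerivAt 0 x).hasDerivAt).const_add _

theorem integral_Iic_zero_of_even (hfi : Integrable f) (heven : ∀ t, f (-t) = f t) :
    ∫ t in Iic 0, f t = (1 / 2 : ℝ) • ∫ t, f t := by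
  have hIoi : ∫ t in Ioi 0, f t = ∫ t in Iic 0, f t := by
    simpa [heven] using integral_comp_neg_Ioi 0 f
  rw [← integral_Iic_add_Ioi hfi.integrableOn hfi.integrableOn, hIoi, ← two_smul ℝ, smul_smul]
  norm_num

end IntegralIic

theorem stdCdf_eq_integral_gaussianPDFReal (x : ℝ) :
    stdCdf x = ∫ t in Iic x, gaussianPDFReal 0 1 t := by
  simp [stdCdf, gaussianPDFReal, div_eq_inv_mul]

theorem stdCdf_sub_stdCdf (a b : ℝ) :
    stdCdf b - stdCdf a = ∫ t in a..b, gaussianPDFReal 0 1 t := by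
  simp only [stdCdf_eq_integral_gaussianPDFReal]
  exact integral_Iic_sub_Iic (integrable_gaussianPDFReal 0 1).integrableOn
    (integrable_gaussianPDFReal 0 1).integrableOn

theorem stdCdf_zero : stdCdf 0 = 1 / 2 := by
  rw [stdCdf_eq_integral_gaussianPDFReal,
    integral_Iic_zero_of_even (integrable_gaussianPDFReal 0 1) (fun t ↦ by simp [gaussianPDFReal]),
    integral_gaussianPDFReal_eq_one 0 one_ne_zero]
  norm_num

theorem hasDerivAt_stdCdf (x : ℝ) : HasDerivAt stdCdf (gaussianPDFReal 0 1 x) x := by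
  simp only [funext stdCdf_eq_integral_gaussianPDFReal]
  exact hasDerivAt_integral_Iic (by unfold gaussianPDFReal; fun_prop)
    (integrable_gaussianPDFReal 0 1) x

theorem integral_exp_neg_sq_div_two (b : ℝ) :
    ∫ u in 0..b, exp (-u ^ 2 / 2) = √(2 * π) * (stdCdf b - stdCdf 0) := by
  rw [stdCdf_sub_stdCdf, ← intervalIntegral.integral_const_mul]
  congr 1 with u
  simp only [gaussianPDFReal, NNReal.coe_one, mul_one, sub_zero]
  field_simp

noncomputable def owenTIntegrand (h x : ℝ) : ℝ := exp (-h ^ 2 * (1 + x ^ 2) / 2) / (1 + x ^ 2)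

theorem OwenT_eq (h a : ℝ) : OwenT h a = (2 * π)⁻¹ * ∫ x in 0..a, owenTIntegrand h x := by
  rw [OwenT, one_div]; rfl

theorem continuous_owenTIntegrand (h : ℝ) : Continuous (owenTIntegrand h) :=
  Continuous.div (by fun_prop) (by fun_prop) fun x ↦ by positivity

theorem hasDerivAt_owenTIntegrand (x h : ℝ) :
    HasDerivAt (owenTIntegrand · x) (-h * exp (-h ^ 2 * (1 + x ^ 2) / 2)) h := by
  have hexp : HasDerivAt (fun h ↦ exp (-h ^ 2 * (1 + x ^ 2) / 2))
      (exp (-h ^ 2 * (1 + x ^ 2) / 2) * (-h * (1 + x ^ 2))) h := by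
    have hinner : HasDerivAt (fun h : ℝ ↦ -h ^ 2 * (1 + x ^ 2) / 2) (-h * (1 + x ^ 2)) h :=
      ((((hasDerivAt_id' h).pow 2).neg.mul_const _).div_const 2).congr_deriv (by ring)
    exact hinner.exp
  exact (hexp.div_const (1 + x ^ 2)).congr_deriv (by field_simp)

theorem norm_neg_mul_exp_neg_sq_mul_one_add_sq_le (h x : ℝ) :
    ‖-h * exp (-h ^ 2 * (1 + x ^ 2) / 2)‖ ≤ |h| := by
  rw [norm_mul, norm_neg, Real.norm_eq_abs, Real.norm_of_nonneg (exp_pos _).le]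
  refine mul_le_of_le_one_right (abs_nonneg h) (exp_le_one_iff.mpr ?_)
  have : 0 ≤ h ^ 2 * (1 + x ^ 2) := by positivity
  linarith

-- substitute `u = h x` after splitting off the factor `exp (-h ^ 2 / 2)`
theorem integral_neg_mul_exp_neg_sq_mul_one_add_sq (h a : ℝ) :
    ∫ x in 0..a, -h * exp (-h ^ 2 * (1 + x ^ 2) / 2) =
      -(2 * π) * gaussianPDFReal 0 1 h * (stdCdf (a * h) - stdCdf 0) := by
  have hfactor : ∀ x, -h * exp (-h ^ 2 * (1 + x ^ 2) / 2) =
      -exp (-h ^ 2 / 2) * (h * exp (-(h * x) ^ 2 / 2)) := fun x ↦ by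
    rw [show -h ^ 2 * (1 + x ^ 2) / 2 = -h ^ 2 / 2 + -(h * x) ^ 2 / 2 by ring, exp_add]; ring
  simp_rw [hfactor, intervalIntegral.integral_const_mul]
  rw [← smul_eq_mul h, smul_integral_comp_mul_left (fun u ↦ exp (-u ^ 2 / 2)), mul_zero,
    integral_exp_neg_sq_div_two, mul_comm h a]
  simp only [gaussianPDFReal, NNReal.coe_one, mul_one, sub_zero]
  field_simp
  rw [sq_sqrt (by positivity)]

theorem hasDerivAt_OwenT_left (a h : ℝ) :
    HasDerivAt (OwenT · a) (-gaussianPDFReal 0 1 h * (stdCdf (a * h) - stdCdf 0)) h := by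
  have hint := (hasDerivAt_integral_of_dominated_loc_of_deriv_le (μ := volume) (a := 0) (b := a)
    (F' := fun h x ↦ -h * exp (-h ^ 2 * (1 + x ^ 2) / 2)) (bound := fun _ ↦ |h| + 1)
    (Metric.ball_mem_nhds h one_pos)
    (.of_forall fun h' ↦ (continuous_owenTIntegrand h').aestronglyMeasurable)
    ((continuous_owenTIntegrand h).intervalIntegrable _ _)
    (by fun_prop : Continuous fun x : ℝ ↦ -h * exp (-h ^ 2 * (1 + x ^ 2) / 2)).aestronglyMeasurable
    (.of_forall fun x _ h' hh' ↦ (norm_neg_mul_exp_neg_sq_mul_one_add_sq_le h' x).trans (by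
      have := abs_sub_abs_le_abs_sub h' h
      rw [Metric.mem_ball, Real.dist_eq] at hh'
      linarith))
    intervalIntegrable_const
    (.of_forall fun x _ h' _ ↦ hasDerivAt_owenTIntegrand x h')).2
  rw [show (OwenT · a) = fun h ↦ (2 * π)⁻¹ * ∫ x in 0..a, owenTIntegrand h x from
    funext fun h ↦ OwenT_eq h a]
  refine (hint.const_mul (2 * π)⁻¹).congr_deriv ?_
  rw [integral_neg_mul_exp_neg_sq_mul_one_add_sq]
  field_simp

theorem OwenT_zero_left (a : ℝ) : OwenT 0 a = arctan a / (2 * π) := by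
  simp [OwenT_eq, owenTIntegrand, div_eq_inv_mul]

theorem OwenT_zero_left_add_inv {r : ℝ} (hr : r ≠ 0) :
    OwenT 0 r + OwenT 0 (1 / r) = if 0 ≤ r then 1 / 4 else -1 / 4 := by
  rw [OwenT_zero_left, OwenT_zero_left, one_div]
  split_ifs with hr0
  · rw [arctan_inv_of_pos (lt_of_le_of_ne hr0 hr.symm)]
    field_simp; ring
  · rw [arctan_inv_of_neg (not_le.mp hr0)]
    field_simp; ring

theorem hasDerivAt_owen_identity_sub {r : ℝ} (hr : r ≠ 0) (x : ℝ) :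
    HasDerivAt (fun h ↦ OwenT h r + OwenT (r * h) (1 / r) -
      ((stdCdf h + stdCdf (r * h)) / 2 - stdCdf h * stdCdf (r * h))) 0 x := by
  have hlin : HasDerivAt (r * ·) r x := by simpa using (hasDerivAt_id x).const_mul r
  have hΦ := hasDerivAt_stdCdf x
  have hΦr := (hasDerivAt_stdCdf (r * x)).comp x hlin
  have hT := hasDerivAt_OwenT_left r x
  have hTr := (hasDerivAt_OwenT_left (1 / r) (r * x)).comp x hlin
  refine ((hT.add hTr).sub (((hΦ.add hΦr).div_const 2).sub (hΦ.mul hΦr))).congr_deriv ?_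
  rw [one_div, inv_mul_cancel_left₀ hr, stdCdf_zero, Function.comp_apply]
  ring

theorem owen_identity (h r : ℝ) (hr : r ≠ 0) :
    OwenT h r + OwenT (r * h) (1 / r) =
      (stdCdf h + stdCdf (r * h)) / 2 - stdCdf h * stdCdf (r * h) -
        (if 0 ≤ r then (0:ℝ) else 1 / 2) := by
  have hderiv := hasDerivAt_owen_identity_sub hr
  have hconst := is_const_of_deriv_eq_zero (fun x ↦ (hderiv x).differentiableAt)
    (fun x ↦ (hderiv x).deriv) h 0
  simp only [mul_zero] at hconst
  rw [OwenT_zero_left_add_inv hr, stdCdf_zero] at hconst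
  split_ifs at hconst ⊢ <;> linarith
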